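/- For every a > 0, the function G(k) = πk·tanh(πk/(2a)) does NOT satisfy the transform functional equation: there exist real k₁, k₂ (indeed any k₁ = k₂ = k ≠ 0 works) such that (k₂ G(k₁) + k₁ G(k₂))·G(k₁ + k₂) − (k₁ + k₂)·G(k₁)·G(k₂) ≠ π²·k₁·k₂·(k₁ + k₂). -/

import Mathlib

/-- `G(k) = πk·tanh(πk/(2a))`. -/
noncomputable def Gtanh (a k : ℝ) : ℝ := Real.pi * k * Real.tanh (Real.pi * k / (2 * a))

lemma tanh_key (a : ℝ) (ha : 0 < a) (k : ℝ) (hk : k ≠ 0) :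
    (k * Gtanh a k + k * Gtanh a k) * Gtanh a (k + k) -
      (k + k) * Gtanh a k * Gtanh a k ≠
    Real.pi ^ 2 * k * k * (k + k) := by
  intro h
  set x := Real.pi * k / (2 * a) with hx
  have h2x : Real.pi * (k + k) / (2 * a) = 2 * x := by rw [hx]; ring
  have hc := Real.cosh_pos x
  have hc2 : Real.cosh x ^ 2 - Real.sinh x ^ 2 = 1 := Real.cosh_sq_sub_sinh_sq x
  simp only [Gtanh, h2x, Real.tanh_eq_sinh_div_cosh, Real.sinh_two_mul,
    Real.cosh_two_mul] at h
  set s := Real.sinh x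
  set c := Real.cosh x
  have hπ := Real.pi_pos
  have hcc : c ^ 2 + s ^ 2 > 0 := by positivity
  have hc0 : c ≠ 0 := ne_of_gt hc
  field_simp at h
  have hz : 2 * Real.pi ^ 2 * k ^ 3 * c = 0 := by
    linear_combination (-(2 * Real.pi ^ 2 * k ^ 3 * c)) * h -
      2 * Real.pi ^ 2 * k ^ 3 * c * (c ^ 2 - s ^ 2 + 1) * hc2
  have hnz : 2 * Real.pi ^ 2 * k ^ 3 * c ≠ 0 := by positivity
  exact hnz hz

theorem not_transformEq_tanh (a : ℝ) (ha : 0 < a) :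
    (∀ k : ℝ, k ≠ 0 →
      (k * Gtanh a k + k * Gtanh a k) * Gtanh a (k + k) -
        (k + k) * Gtanh a k * Gtanh a k ≠
      Real.pi ^ 2 * k * k * (k + k)) ∧
    (∃ k₁ k₂ : ℝ,
      (k₂ * Gtanh a k₁ + k₁ * Gtanh a k₂) * Gtanh a (k₁ + k₂) -
        (k₁ + k₂) * Gtanh a k₁ * Gtanh a k₂ ≠
      Real.pi ^ 2 * k₁ * k₂ * (k₁ + k₂)) := by
  refine ⟨fun k hk => tanh_key a ha k hk, 1, 1, tanh_key a ha 1 one_ne_zero⟩
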